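/- arXiv:1511.07728 — 8 statements merged into one kernel-verified Lean document; each statement's English description precedes it below -/
import Mathlib

section
/- If 5/3 < γ ≤ 2, the function G(y) = 1/((1+3y)(1 - y/(γ-1))²) on [0, γ-1) has a unique global minimum at y_m = (3γ-5)/9, with minimal value G(y_m) = L_min² = (9/4)·(γ-1)²/(γ-2/3)³ < 1. -/
open Set

theorem stmt_3 (γ : ℝ) (hγ1 : 5 / 3 < γ) (hγ2 : γ ≤ 2) :
    ((1 + 3 * ((3 * γ - 5) / 9)) * (1 - ((3 * γ - 5) / 9) / (γ - 1)) ^ 2)⁻¹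
      = 9 / 4 * (γ - 1) ^ 2 / (γ - 2 / 3) ^ 3 ∧
    9 / 4 * (γ - 1) ^ 2 / (γ - 2 / 3) ^ 3 < 1 ∧
    ∀ y ∈ Set.Ico (0:ℝ) (γ - 1), y ≠ (3 * γ - 5) / 9 →
      ((1 + 3 * ((3 * γ - 5) / 9)) * (1 - ((3 * γ - 5) / 9) / (γ - 1)) ^ 2)⁻¹
        < ((1 + 3 * y) * (1 - y / (γ - 1)) ^ 2)⁻¹ := by
  have hg : (0:ℝ) < γ - 1 := by linarith
  have hg23 : (0:ℝ) < γ - 2/3 := by linarith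
  have hgm : (0:ℝ) < 3*γ - 2 := by linarith
  have hD : (1 + 3 * ((3 * γ - 5) / 9)) * (1 - ((3 * γ - 5) / 9) / (γ - 1)) ^ 2
      = 4*(3*γ-2)^3/(243*(γ-1)^2) := by
    field_simp
    ring
  refine ⟨?_, ?_, ?_⟩
  · rw [hD, inv_div, div_eq_div_iff (by positivity) (by positivity)]
    ring
  · rw [div_lt_one (by positivity)]
    nlinarith [sq_nonneg (γ - 2), sq_nonneg (γ - 1), sq_nonneg (3*γ - 5)]
  · rintro y ⟨hy0, hy1⟩ hyne
    have hylt : y / (γ - 1) < 1 := (div_lt_one hg).mpr hy1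
    have hDy : 0 < (1 + 3 * y) * (1 - y / (γ - 1)) ^ 2 := by
      have : 0 < 1 - y / (γ - 1) := by linarith
      positivity
    apply inv_strictAnti₀ hDy
    have hsq : 0 < (y - (3*γ-5)/9)^2 := by
      have : y - (3*γ-5)/9 ≠ 0 := sub_ne_zero.mpr hyne
      positivity
    rw [show (1 - (3 * γ - 5) / 9 / (γ - 1)) = (1 - ((3 * γ - 5) / 9) / (γ - 1)) by ring, hD,
      lt_div_iff₀ (by positivity),
      show (1 - y / (γ - 1)) = ((γ-1) - y)/(γ-1) by field_simp, div_pow]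
    rw [show (1 + 3 * y) * (((γ-1) - y)^2 / (γ-1)^2) * (243 * (γ - 1) ^ 2)
      = (1 + 3 * y) * ((γ-1) - y)^2 * 243 * ((γ-1)^2 / (γ-1)^2) by ring,
      div_self (by positivity), mul_one]
    nlinarith [mul_pos hsq (show (0:ℝ) < (12*(γ-1)+1)/9 - y by nlinarith), sq_nonneg (γ-1)]
end

section
/- If 5/3 < γ ≤ 2, then G is strictly decreasing on [0, (3γ-5)/9] and strictly increasing on [(3γ-5)/9, γ-1), where G(y) = 1/((1+3y)(1 - y/(γ-1))²). -/
open Set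

theorem stmt_4 (γ : ℝ) (hγ1 : 5 / 3 < γ) (hγ2 : γ ≤ 2) :
    StrictAntiOn (fun y : ℝ => ((1 + 3 * y) * (1 - y / (γ - 1)) ^ 2)⁻¹)
      (Set.Icc 0 ((3 * γ - 5) / 9)) ∧
    StrictMonoOn (fun y : ℝ => ((1 + 3 * y) * (1 - y / (γ - 1)) ^ 2)⁻¹)
      (Set.Ico ((3 * γ - 5) / 9) (γ - 1)) := by
  have hc : (0:ℝ) < γ - 1 := by linarith
  have hc2 : (2:ℝ)/3 < γ - 1 := by linarith
  have hc1 : γ - 1 ≤ 1 := by linarith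
  have hfg : ∀ t : ℝ, (1 + 3*t) * (1 - t/(γ-1))^2
      = (1+3*t)*((γ-1)-t)^2 / (γ-1)^2 := by
    intro t
    field_simp
  have hfpos : ∀ t : ℝ, 0 ≤ t → t < γ-1 → 0 < (1 + 3*t) * (1 - t/(γ-1))^2 := by
    intro t ht0 htc
    have h1 : 0 < 1 + 3*t := by linarith
    have h2 : 1 - t/(γ-1) ≠ 0 := by
      have : t/(γ-1) < 1 := (div_lt_one hc).2 htc
      linarith
    positivity
  have key1 : ∀ x y : ℝ, 0 ≤ x → 9*y ≤ 3*(γ-1) - 2 → x < y →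
      (1+3*x)*((γ-1)-x)^2 < (1+3*y)*((γ-1)-y)^2 := by
    intro x y hx hy hxy
    have p1 : 0 < y - x := by linarith
    have p2 : 0 ≤ γ - 1 - y := by linarith
    have p3 : 0 ≤ 3*(γ-1) - 2 - 9*y := by linarith
    have p4 : 0 < γ - 1 - x := by linarith
    have p5 : 0 < 3*(γ-1) - 2 - 9*x := by linarith
    nlinarith [mul_nonneg (mul_nonneg p1.le p2) p3, mul_pos (mul_pos p1 p4) p5,
      mul_nonneg (mul_nonneg p1.le p2) p5.le, mul_nonneg (mul_nonneg p1.le p4.le) p3,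
      mul_pos p1 p1, mul_nonneg (mul_nonneg p1.le p1.le) p1.le]
  have key2 : ∀ x y : ℝ, 3*(γ-1) - 2 ≤ 9*x → y < γ-1 → x < y →
      (1+3*y)*((γ-1)-y)^2 < (1+3*x)*((γ-1)-x)^2 := by
    intro x y hx hy hxy
    have h1 : 0 < y - x := by linarith
    have h2 : 0 < γ - 1 - y := by linarith
    have h3 : 0 ≤ 9*x - (3*(γ-1)-2) := by linarith
    nlinarith [mul_pos h1 h2, mul_nonneg h3 h1.le, mul_nonneg h3 h2.le,
      mul_pos (mul_pos h1 h2) h2, mul_nonneg (mul_nonneg h3 h1.le) h2.le,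
      mul_pos h1 h1, mul_nonneg h3 h3]
  have hmemIcc : ∀ t : ℝ, t ∈ Set.Icc 0 ((3*γ-5)/9) → 0 ≤ t ∧ t < γ - 1 := by
    intro t ht
    exact ⟨ht.1, by nlinarith [ht.2]⟩
  have hmemIco : ∀ t : ℝ, t ∈ Set.Ico ((3*γ-5)/9) (γ-1) → 0 ≤ t ∧ t < γ - 1 := by
    intro t ht
    refine ⟨?_, ht.2⟩
    nlinarith [ht.1]
  constructor
  · intro x hx y hy hxy
    simp only
    obtain ⟨hx0, hxc⟩ := hmemIcc x hx
    obtain ⟨hy0, hyc⟩ := hmemIcc y hy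
    have hg : (1+3*x)*((γ-1)-x)^2 < (1+3*y)*((γ-1)-y)^2 := by
      apply key1 x y hx0 _ hxy
      nlinarith [hy.2]
    have hf : (1 + 3*x) * (1 - x/(γ-1))^2 < (1 + 3*y) * (1 - y/(γ-1))^2 := by
      rw [hfg, hfg]
      gcongr
    have hpx := hfpos x hx0 hxc
    exact inv_strictAnti₀ hpx hf
  · intro x hx y hy hxy
    simp only
    obtain ⟨hx0, hxc⟩ := hmemIco x hx
    obtain ⟨hy0, hyc⟩ := hmemIco y hy
    have hg : (1+3*y)*((γ-1)-y)^2 < (1+3*x)*((γ-1)-x)^2 := by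
      apply key2 x y _ hyc hxy
      nlinarith [hx.1]
    have hf : (1 + 3*y) * (1 - y/(γ-1))^2 < (1 + 3*x) * (1 - x/(γ-1))^2 := by
      rw [hfg, hfg]
      gcongr
    have hpy := hfpos y hy0 hyc
    exact inv_strictAnti₀ hpy hf
end

section
/- If 5/3 < γ ≤ 2 and L_min² < L² < 1 where L_min² = (9/4)(γ-1)²/(γ-2/3)³, then the equation G(y) = L² has exactly two solutions y₁, y₂ in (0, γ-1), satisfying 0 < y₁ < (3γ-5)/9 < y₂. -/
/-!
Write `f y = (1 + 3y)(1 - y/a)²` with `a = γ - 1`, so that `G = f⁻¹`. Since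
`f' y = (a - y)(3a - 2 - 9y)/a²`, `f` increases on `[0, c]` and decreases on `[c, a]`, where
`c = (3a - 2)/9 = (3γ - 5)/9`, with `f 0 = 1`, `f a = 0` and `f c = 1/L_min²`. Hence every value
`1/L²` strictly between `1` and `1/L_min²` is taken exactly once on each side of `c`.
-/

open Set

theorem exists_two_preimages_of_strictMonoOn_of_strictAntiOn {f : ℝ → ℝ} {p q r v : ℝ}
    (hpq : p ≤ q) (hqr : q ≤ r) (hf : ContinuousOn f (Icc p r))
    (hmono : StrictMonoOn f (Icc p q)) (hanti : StrictAntiOn f (Icc q r))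
    (hp : f p < v) (hr : f r < v) (hq : v < f q) :
    ∃ y₁ y₂, y₁ ∈ Ioo p q ∧ y₂ ∈ Ioo q r ∧ f y₁ = v ∧ f y₂ = v ∧
      ∀ y ∈ Icc p r, f y = v → y = y₁ ∨ y = y₂ := by
  obtain ⟨y₁, hy₁, hfy₁⟩ :=
    intermediate_value_Ioo hpq (hf.mono (Icc_subset_Icc_right hqr)) ⟨hp, hq⟩
  obtain ⟨y₂, hy₂, hfy₂⟩ :=
    intermediate_value_Ioo' hqr (hf.mono (Icc_subset_Icc_left hpq)) ⟨hr, hq⟩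
  refine ⟨y₁, y₂, hy₁, hy₂, hfy₁, hfy₂, fun y hy hfy => ?_⟩
  rcases le_total y q with h | h
  · exact .inl <| hmono.injOn ⟨hy.1, h⟩ (Ioo_subset_Icc_self hy₁) (hfy.trans hfy₁.symm)
  · exact .inr <| hanti.injOn ⟨h, hy.2⟩ (Ioo_subset_Icc_self hy₂) (hfy.trans hfy₂.symm)

noncomputable def profile (a y : ℝ) : ℝ := (1 + 3 * y) * (1 - y / a) ^ 2

namespace profile

variable {a : ℝ}

theorem continuous (a : ℝ) : Continuous (profile a) := by
  unfold profile; fun_prop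

theorem hasDerivAt (ha : a ≠ 0) (y : ℝ) :
    HasDerivAt (profile a) ((a - y) * (3 * a - 2 - 9 * y) / a ^ 2) y := by
  have h₁ : HasDerivAt (fun y : ℝ => 1 + 3 * y) 3 y := by
    simpa using ((hasDerivAt_id y).const_mul (3 : ℝ)).const_add 1
  have h₂ : HasDerivAt (fun y : ℝ => 1 - y / a) (-(1 / a)) y := by
    simpa using ((hasDerivAt_id y).div_const a).const_sub 1
  refine (h₁.mul (h₂.pow 2)).congr_deriv ?_
  simp only [Pi.pow_apply, Nat.cast_ofNat, Nat.add_one_sub_one, pow_one]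
  field_simp
  ring

theorem apply_zero (a : ℝ) : profile a 0 = 1 := by
  simp [profile]

theorem apply_self (ha : a ≠ 0) : profile a a = 0 := by
  simp [profile, div_self ha]

theorem apply_critical (ha : a ≠ 0) :
    profile a ((3 * a - 2) / 9) = 4 / 9 * (a + 1 / 3) ^ 3 / a ^ 2 := by
  unfold profile
  field_simp
  ring

theorem strictMonoOn_Iic (ha : 0 < a) : StrictMonoOn (profile a) (Iic ((3 * a - 2) / 9)) := by
  refine strictMonoOn_of_deriv_pos (convex_Iic _) (continuous a).continuousOn fun y hy => ?_
  rw [interior_Iic, mem_Iio] at hy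
  rw [(hasDerivAt ha.ne' y).deriv]
  have h₁ : 0 < a - y := by linarith
  have h₂ : 0 < 3 * a - 2 - 9 * y := by linarith
  positivity

theorem strictAntiOn_Icc (ha : 0 < a) :
    StrictAntiOn (profile a) (Icc ((3 * a - 2) / 9) a) := by
  refine strictAntiOn_of_deriv_neg (convex_Icc _ _) (continuous a).continuousOn fun y hy => ?_
  rw [interior_Icc, mem_Ioo] at hy
  rw [(hasDerivAt ha.ne' y).deriv]
  have h₁ : 0 < a - y := by linarith
  have h₂ : 3 * a - 2 - 9 * y < 0 := by linarith
  exact div_neg_of_neg_of_pos (mul_neg_of_pos_of_neg h₁ h₂) (by positivity)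

end profile

theorem stmt_5_general (γ : ℝ) (hγ1 : 5 / 3 < γ) (L2 : ℝ)
    (hL2min : 9 / 4 * (γ - 1) ^ 2 / (γ - 2 / 3) ^ 3 < L2) (hL2 : L2 < 1) :
    ∃ y₁ y₂ : ℝ, 0 < y₁ ∧ y₁ < (3 * γ - 5) / 9 ∧ (3 * γ - 5) / 9 < y₂ ∧ y₂ < γ - 1 ∧
      ((1 + 3 * y₁) * (1 - y₁ / (γ - 1)) ^ 2)⁻¹ = L2 ∧
      ((1 + 3 * y₂) * (1 - y₂ / (γ - 1)) ^ 2)⁻¹ = L2 ∧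
      ∀ y ∈ Set.Ioo (0:ℝ) (γ - 1),
        ((1 + 3 * y) * (1 - y / (γ - 1)) ^ 2)⁻¹ = L2 → y = y₁ ∨ y = y₂ := by
  have ha : 0 < γ - 1 := by linarith
  have hγ : 0 < γ - 2 / 3 := by linarith
  have hL2pos : 0 < L2 := lt_trans (by positivity) hL2min
  have hc : (3 * γ - 5) / 9 = (3 * (γ - 1) - 2) / 9 := by ring
  have hpeak : L2⁻¹ < profile (γ - 1) ((3 * (γ - 1) - 2) / 9) := by
    have hLmin : 9 / 4 * (γ - 1) ^ 2 / (γ - 2 / 3) ^ 3 =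
        (profile (γ - 1) ((3 * (γ - 1) - 2) / 9))⁻¹ := by
      rw [profile.apply_critical ha.ne', show γ - 1 + 1 / 3 = γ - 2 / 3 by ring]
      field_simp
    rw [hLmin] at hL2min
    simpa using inv_strictAnti₀ (hLmin ▸ by positivity) hL2min
  obtain ⟨y₁, y₂, hy₁, hy₂, hf₁, hf₂, huniq⟩ :=
    exists_two_preimages_of_strictMonoOn_of_strictAntiOn (p := 0) (by linarith) (by linarith)
      (profile.continuous _).continuousOn ((profile.strictMonoOn_Iic ha).mono Icc_subset_Iic_self)
      (profile.strictAntiOn_Icc ha)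
      (by rw [profile.apply_zero]; exact one_lt_inv₀ hL2pos |>.mpr hL2)
      (by rw [profile.apply_self ha.ne']; positivity) hpeak
  rw [hc]
  refine ⟨y₁, y₂, hy₁.1, hy₁.2, hy₂.1, hy₂.2, inv_eq_iff_eq_inv.mpr hf₁,
    inv_eq_iff_eq_inv.mpr hf₂, fun y hy hG => huniq y (Ioo_subset_Icc_self hy) ?_⟩
  exact inv_eq_iff_eq_inv.mp hG

theorem stmt_5 (γ : ℝ) (hγ1 : 5 / 3 < γ) (hγ2 : γ ≤ 2) (L2 : ℝ)
    (hL2min : 9 / 4 * (γ - 1) ^ 2 / (γ - 2 / 3) ^ 3 < L2) (hL2 : L2 < 1) :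
    ∃ y₁ y₂ : ℝ, 0 < y₁ ∧ y₁ < (3 * γ - 5) / 9 ∧ (3 * γ - 5) / 9 < y₂ ∧ y₂ < γ - 1 ∧
      ((1 + 3 * y₁) * (1 - y₁ / (γ - 1)) ^ 2)⁻¹ = L2 ∧
      ((1 + 3 * y₂) * (1 - y₂ / (γ - 1)) ^ 2)⁻¹ = L2 ∧
      ∀ y ∈ Set.Ioo (0:ℝ) (γ - 1),
        ((1 + 3 * y) * (1 - y / (γ - 1)) ^ 2)⁻¹ = L2 → y = y₁ ∨ y = y₂ :=
  stmt_5_general γ hγ1 L2 hL2min hL2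
end

section
/- For 5/3 < γ ≤ 2 and L_min² < L² < 1, the number y₁ = (1/9)·{6γ - 7 - 2(3γ-2)·cos[π/3 - (1/3)·arccos(2L_min²/L² - 1)]} satisfies G(y₁) = L², where G(y) = 1/((1+3y)(1 - y/(γ-1))²) and L_min² = (9/4)(γ-1)²/(γ-2/3)³. -/
open Real

theorem stmt_8 (γ : ℝ) (hγ1 : 5 / 3 < γ) (hγ2 : γ ≤ 2) (L2 : ℝ)
    (hL2min : 9 / 4 * (γ - 1) ^ 2 / (γ - 2 / 3) ^ 3 < L2) (hL2 : L2 < 1) :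
    ((1 + 3 * ((1 / 9) * (6 * γ - 7 - 2 * (3 * γ - 2) *
        Real.cos (Real.pi / 3 - (1 / 3) *
          Real.arccos (2 * (9 / 4 * (γ - 1) ^ 2 / (γ - 2 / 3) ^ 3) / L2 - 1))))) *
      (1 - ((1 / 9) * (6 * γ - 7 - 2 * (3 * γ - 2) *
        Real.cos (Real.pi / 3 - (1 / 3) *
          Real.arccos (2 * (9 / 4 * (γ - 1) ^ 2 / (γ - 2 / 3) ^ 3) / L2 - 1)))) / (γ - 1)) ^ 2)⁻¹
      = L2 := by
  have hd : (0:ℝ) < γ - 2/3 := by linarith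
  have ha : (0:ℝ) < γ - 1 := by linarith
  set m : ℝ := 9 / 4 * (γ - 1) ^ 2 / (γ - 2 / 3) ^ 3 with hmdef
  have hm : 0 < m := by positivity
  clear_value m
  have hL2pos : 0 < L2 := lt_trans hm hL2min
  have hx1 : 2 * m / L2 - 1 ≤ 1 := by
    have : 2 * m / L2 ≤ 2 := by rw [div_le_iff₀ hL2pos]; linarith
    linarith
  have hx2 : -1 ≤ 2 * m / L2 - 1 := by
    have : 0 ≤ 2 * m / L2 := by positivity
    linarith
  set θ : ℝ := Real.arccos (2 * m / L2 - 1) with hθdef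
  clear_value θ
  have hcosθ : Real.cos θ = 2 * m / L2 - 1 := by rw [hθdef]; exact Real.cos_arccos hx2 hx1
  set c : ℝ := Real.cos (Real.pi / 3 - (1/3) * θ) with hcdef
  have hc : 4 * c ^ 3 - 3 * c = 1 - 2 * m / L2 := by
    have h3 : Real.cos (3 * (Real.pi / 3 - (1/3) * θ)) = -(Real.cos θ) := by
      rw [show 3 * (Real.pi / 3 - (1/3) * θ) = Real.pi - θ by ring, Real.cos_pi_sub]
    rw [Real.cos_three_mul, hcosθ] at h3
    rw [hcdef]
    linarith
  clear_value c
  have hL2ne : L2 ≠ 0 := ne_of_gt hL2pos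
  have hc' : L2 * (4 * c ^ 3 - 3 * c) = L2 - 2 * m := by
    rw [hc]; field_simp
  have hb : ((γ - 2/3)^3 : ℝ) ≠ 0 := by positivity
  have hm' : m * (γ - 2/3)^3 = 9/4 * (γ - 1)^2 := by
    rw [hmdef, div_mul_cancel₀ _ hb]
  have key : 2 * L2 * (3*γ-2)^3 * (1-c) * (1+2*c)^2 = 243 * (γ-1)^2 := by
    linear_combination (-2*(3*γ-2)^3) * hc' + 108 * hm'
  have hane : γ - 1 ≠ 0 := ne_of_gt ha
  rw [inv_eq_iff_eq_inv]
  field_simp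
  linear_combination 3 * key
end

section
/- For the polytropic model with 5/3 < γ ≤ 2, the equation G(y) = 1 on (0, γ-1) has the unique solution y* = γ - 1 - (1/6)·(1 + √(12γ-11)), where G(y) = 1/((1+3y)(1 - y/(γ-1))²). -/
open Set Real

theorem stmt_9 (γ : ℝ) (hγ1 : 5 / 3 < γ) (hγ2 : γ ≤ 2) :
    (γ - 1 - (1 / 6) * (1 + Real.sqrt (12 * γ - 11))) ∈ Set.Ioo (0:ℝ) (γ - 1) ∧
    ((1 + 3 * (γ - 1 - (1 / 6) * (1 + Real.sqrt (12 * γ - 11)))) *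
      (1 - (γ - 1 - (1 / 6) * (1 + Real.sqrt (12 * γ - 11))) / (γ - 1)) ^ 2)⁻¹ = 1 ∧
    ∀ y ∈ Set.Ioo (0:ℝ) (γ - 1),
      ((1 + 3 * y) * (1 - y / (γ - 1)) ^ 2)⁻¹ = 1 →
        y = γ - 1 - (1 / 6) * (1 + Real.sqrt (12 * γ - 11)) := by
  set s := Real.sqrt (12 * γ - 11) with hs_def
  have h0 : (0:ℝ) ≤ 12 * γ - 11 := by linarith
  have hsnn : 0 ≤ s := Real.sqrt_nonneg _
  have hs2 : s ^ 2 = 12 * γ - 11 := Real.sq_sqrt h0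
  have hs3 : 3 < s := by nlinarith [hs2, hsnn]
  have hsu : s < 6 * γ - 7 := by nlinarith [hs2, hsnn]
  have hb0 : (0:ℝ) < γ - 1 := by linarith
  have hb : γ - 1 ≠ 0 := ne_of_gt hb0
  refine ⟨⟨by linarith, by linarith⟩, ?_, ?_⟩
  · rw [inv_eq_one]
    field_simp
    ring_nf
    nlinarith [hs2, sq_nonneg s]
  · rintro y ⟨hy0, hy1⟩ heq
    rw [inv_eq_one] at heq
    field_simp at heq
    have e1 : (1 + 3 * y) * ((γ - 1) - y) ^ 2 = (γ - 1) ^ 2 := by linear_combination heq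
    have e2 : y * ((6 * y - 6 * (γ - 1) + 1 - s) * (6 * y - 6 * (γ - 1) + 1 + s)) = 0 := by
      linear_combination 12 * e1 - y * hs2
    rcases mul_eq_zero.mp e2 with h | h
    · linarith
    rcases mul_eq_zero.mp h with h | h
    · linarith
    · linarith
end

section
/- Any critical point (x, z) of H_L(x,z) = x⁴z²(L²/f(z)² - 1 + 1/x) with x, z > 0 satisfies x = 3/4 + 1/(4ν(z)²) and f(z)²/(1 + 3ν(z)²) = L²; in particular x > 1, i.e. the critical point lies outside the event horizon. -/
/-!
Since `x⁴ · (1/x) = x³`, the `x`-equation reads `4 (L²/f² - 1) x + 3 = 0`, and with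
`ν = z f'/f` the `z`-equation reads `1/x - 1 + (L²/f²)(1 - ν) = 0`. Eliminating `L²/f²`
gives `(4x - 3) ν = 1` and then `(L²/f²)(1 + 3ν) = 1`; finally `ν < 1` forces `x > 1`.
-/

lemma hasDerivAt_pow_four_mul_add_one_div (a b x : ℝ) :
    HasDerivAt (fun t : ℝ => t ^ 4 * b * (a + 1 / t)) (b * x ^ 2 * (4 * a * x + 3)) x := by
  have hfun : (fun t : ℝ => t ^ 4 * b * (a + 1 / t)) = fun t => b * (a * t ^ 4 + t ^ 3) := by
    funext t
    rcases eq_or_ne t 0 with rfl | ht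
    · simp
    · field_simp
  rw [hfun]
  have hpoly := (((hasDerivAt_pow 4 x).const_mul a).fun_add (hasDerivAt_pow 3 x)).const_mul b
  exact hpoly.congr_deriv (by norm_num; ring)

lemma hasDerivAt_mul_sq_mul_div_sq_add {g : ℝ → ℝ} {z : ℝ} (hg : DifferentiableAt ℝ g z)
    (hgz : g z ≠ 0) (c A k : ℝ) :
    HasDerivAt (fun t : ℝ => c * t ^ 2 * (A / g t ^ 2 + k))
      (2 * c * z * (k + A / g z ^ 2 * (1 - z * deriv g z / g z))) z := by
  have hsq : HasDerivAt (fun t => g t ^ 2) (2 * g z * deriv g z) z := by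
    simpa using hg.hasDerivAt.fun_pow 2
  have hquot := ((hasDerivAt_const z A).fun_div hsq (pow_ne_zero 2 hgz)).add_const k
  refine (((hasDerivAt_pow 2 z).const_mul c).fun_mul hquot).congr_deriv ?_
  field_simp
  ring

lemma critical_point_relations {a ν x : ℝ} (hx : x ≠ 0) (hν : ν ≠ 0)
    (hcx : 4 * (a - 1) * x + 3 = 0) (hcz : 1 / x - 1 + a * (1 - ν) = 0) :
    x = 3 / 4 + 1 / (4 * ν) ∧ a * (1 + 3 * ν) = 1 := by
  have hcz' : 1 + a * x * (1 - ν) - x = 0 := by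
    field_simp at hcz
    linarith
  have haν : 4 * x * (a * ν) = 1 := by linear_combination hcx - 4 * hcz'
  constructor
  · field_simp
    linear_combination haν - ν * hcx
  · have h4x : 4 * x ≠ 0 := by positivity
    apply mul_left_cancel₀ h4x
    linear_combination hcx + 3 * haν

lemma one_lt_three_div_four_add_one_div {ν : ℝ} (h0 : 0 < ν) (h1 : ν < 1) :
    1 < 3 / 4 + 1 / (4 * ν) := by
  have : 1 < 1 / ν := by rw [lt_one_div one_pos h0]; simpa
  linarith [show 1 / (4 * ν) = 1 / 4 * (1 / ν) by field_simp]

theorem stmt_12_general (f : ℝ → ℝ) (L : ℝ)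
    (hν : ∀ z : ℝ, 0 < z →
      0 < z * deriv f z / f z ∧ z * deriv f z / f z < 1)
    (x z : ℝ) (hx : 0 < x) (hz : 0 < z)
    (hcx : deriv (fun x' : ℝ => x' ^ 4 * z ^ 2 * (L ^ 2 / (f z) ^ 2 - 1 + 1 / x')) x = 0)
    (hcz : deriv (fun z' : ℝ => x ^ 4 * z' ^ 2 * (L ^ 2 / (f z') ^ 2 - 1 + 1 / x)) z = 0) :
    x = 3 / 4 + 1 / (4 * (z * deriv f z / f z)) ∧
    (f z) ^ 2 / (1 + 3 * (z * deriv f z / f z)) = L ^ 2 ∧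
    1 < x := by
  obtain ⟨hν0, hν1⟩ := hν z hz
  set ν := z * deriv f z / f z
  -- `ν ≠ 0` excludes the junk cases `f z = 0` and `deriv f z = 0` (non-differentiability).
  have hfz : f z ≠ 0 := fun h => by simp [ν, h] at hν0
  have hf : DifferentiableAt ℝ f z :=
    differentiableAt_of_deriv_ne_zero fun h => by simp [ν, h] at hν0
  rw [(hasDerivAt_pow_four_mul_add_one_div _ _ x).deriv] at hcx
  have hzfun : (fun z' : ℝ => x ^ 4 * z' ^ 2 * (L ^ 2 / (f z') ^ 2 - 1 + 1 / x))
      = fun t => x ^ 4 * t ^ 2 * (L ^ 2 / f t ^ 2 + (1 / x - 1)) := by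
    funext t; ring
  rw [hzfun, (hasDerivAt_mul_sq_mul_div_sq_add hf hfz _ _ _).deriv] at hcz
  obtain ⟨hxν, hLf⟩ := critical_point_relations hx.ne' hν0.ne'
    (by simpa [hz.ne', hx.ne'] using hcx) (by simpa [hz.ne', hx.ne'] using hcz)
  refine ⟨hxν, ?_, hxν ▸ one_lt_three_div_four_add_one_div hν0 hν1⟩
  field_simp at hLf ⊢
  linarith

theorem stmt_12 (f : ℝ → ℝ) (L : ℝ) (hL : 0 < L)
    (hfpos : ∀ z : ℝ, 0 < z → 0 < f z)
    (hfdiff : ∀ z : ℝ, 0 < z → DifferentiableAt ℝ f z)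
    (hν : ∀ z : ℝ, 0 < z →
      0 < z * deriv f z / f z ∧ z * deriv f z / f z < 1)
    (x z : ℝ) (hx : 0 < x) (hz : 0 < z)
    (hcx : deriv (fun x' : ℝ => x' ^ 4 * z ^ 2 * (L ^ 2 / (f z) ^ 2 - 1 + 1 / x')) x = 0)
    (hcz : deriv (fun z' : ℝ => x ^ 4 * z' ^ 2 * (L ^ 2 / (f z') ^ 2 - 1 + 1 / x)) z = 0) :
    x = 3 / 4 + 1 / (4 * (z * deriv f z / f z)) ∧
    (f z) ^ 2 / (1 + 3 * (z * deriv f z / f z)) = L ^ 2 ∧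
    1 < x :=
  stmt_12_general f L hν x z hx hz hcx hcz
end

section
/- At a critical point (x_c, z_c) of H_L one has dℒ/dz(z_c) = (L²/(2x_c z_c))·(1 + 3ν_c² - 3w_c), where ℒ(z) = f(z)²/(1+3ν(z)²); consequently the critical point is a saddle of H_L (negative Hessian determinant) iff ℒ'(z_c) > 0 and a local extremum iff ℒ'(z_c) < 0. -/
theorem stmt_14 (f ν w : ℝ → ℝ) (L xc zc : ℝ) (hL : 0 < L) (hxc : 0 < xc) (hzc : 0 < zc)
    (hfpos : ∀ z : ℝ, 0 < z → 0 < f z)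
    (hfdiff : ∀ z : ℝ, 0 < z → DifferentiableAt ℝ f z)
    (hνdiff : ∀ z : ℝ, 0 < z → DifferentiableAt ℝ ν z)
    (hν : ∀ z : ℝ, 0 < z → (ν z) ^ 2 = z * deriv f z / f z)
    (hνrange : ∀ z : ℝ, 0 < z → 0 < ν z ∧ ν z < 1)
    (hw : ∀ z : ℝ, 0 < z → w z = z * deriv ν z / ν z)
    (hcrit1 : xc = 3 / 4 + 1 / (4 * (ν zc) ^ 2))
    (hcrit2 : (f zc) ^ 2 / (1 + 3 * (ν zc) ^ 2) = L ^ 2) :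
    deriv (fun z : ℝ => (f z) ^ 2 / (1 + 3 * (ν z) ^ 2)) zc =
      L ^ 2 / (2 * xc * zc) * (1 + 3 * (ν zc) ^ 2 - 3 * w zc) ∧
    (-xc ^ 4 * zc ^ 2 * (1 + 3 * (ν zc) ^ 2 - 3 * w zc) < 0 ↔
      0 < deriv (fun z : ℝ => (f z) ^ 2 / (1 + 3 * (ν z) ^ 2)) zc) ∧
    (0 < -xc ^ 4 * zc ^ 2 * (1 + 3 * (ν zc) ^ 2 - 3 * w zc) ↔
      deriv (fun z : ℝ => (f z) ^ 2 / (1 + 3 * (ν z) ^ 2)) zc < 0) := by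
  have hfz := hfpos zc hzc
  have hν0 := (hνrange zc hzc).1
  have hden : (0:ℝ) < 1 + 3 * (ν zc) ^ 2 := by positivity
  -- derivative values
  have hf' : deriv f zc = (ν zc) ^ 2 * f zc / zc := by
    rw [hν zc hzc]; field_simp
  have hν' : deriv ν zc = w zc * ν zc / zc := by
    rw [hw zc hzc]; field_simp
  have Hf : HasDerivAt f ((ν zc) ^ 2 * f zc / zc) zc := by
    rw [← hf']; exact (hfdiff zc hzc).hasDerivAt
  have Hν : HasDerivAt ν (w zc * ν zc / zc) zc := by
    rw [← hν']; exact (hνdiff zc hzc).hasDerivAt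
  have Hnum : HasDerivAt (fun z => (f z) ^ 2)
      ((2 : ℕ) * f zc ^ 1 * ((ν zc) ^ 2 * f zc / zc)) zc := Hf.pow 2
  have Hden : HasDerivAt (fun z => 1 + 3 * (ν z) ^ 2)
      (3 * ((2 : ℕ) * ν zc ^ 1 * (w zc * ν zc / zc))) zc :=
    ((Hν.pow 2).const_mul 3).const_add 1
  have Hdiv := Hnum.div Hden hden.ne'
  have hD : deriv (fun z : ℝ => (f z) ^ 2 / (1 + 3 * (ν z) ^ 2)) zc =
      ((2 : ℕ) * f zc ^ 1 * ((ν zc) ^ 2 * f zc / zc) * (1 + 3 * (ν zc) ^ 2) -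
        (f zc) ^ 2 * (3 * ((2 : ℕ) * ν zc ^ 1 * (w zc * ν zc / zc)))) /
        (1 + 3 * (ν zc) ^ 2) ^ 2 := Hdiv.deriv
  have key : deriv (fun z : ℝ => (f z) ^ 2 / (1 + 3 * (ν z) ^ 2)) zc =
      L ^ 2 / (2 * xc * zc) * (1 + 3 * (ν zc) ^ 2 - 3 * w zc) := by
    rw [hD, ← hcrit2, hcrit1]
    field_simp
    ring
  have hc : 0 < L ^ 2 / (2 * xc * zc) := by positivity
  have hx4 : 0 < xc ^ 4 * zc ^ 2 := by positivity
  refine ⟨key, ?_, ?_⟩ <;> rw [key] <;> constructor <;> intro h <;> nlinarith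
end

section
/- Let J(z) = H_L(x₁(z), z) be the value of H_L along the curve c₁, where x₁(z) = (3/4)(1 - L²/f(z)²)⁻¹. Then dJ/dz(z) = (2/3)·z·x₁(z)⁴·(1 - L²/ℒ(z)), where ℒ(z) = f(z)²/(1+3ν(z)²). In particular J is strictly increasing where ℒ(z) > L² and strictly decreasing where ℒ(z) < L². -/
/-!
Writing `u = 1 - L²/f²`, so that `x₁ = 3/(4u)`, the value of `H_L` along the curve collapses to
`J = (27/256) z² / u³`. Since `u' = 2L² f'/f³ = 2L²ν²/(z f²)` by `z f' = f ν²`, differentiating gives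
`J' = (27/128) z u⁻⁴ (1 - L²(1 + 3ν²)/f²)`, which is `(2/3) z x₁⁴ (1 - L²/ℒ)`.
-/

/-- Also true at `t = 1`, where both sides are `0` because `x / 0 = 0`; so `J` can be rewritten
globally, with no need to localise near `z`. -/
lemma critical_value_eq (t : ℝ) :
    ((3 / 4) / (1 - t)) ^ 4 * (t - 1 + 1 / ((3 / 4) / (1 - t))) = 27 / 256 / (1 - t) ^ 3 := by
  rcases eq_or_ne (1 - t) 0 with h | h
  · simp [h]
  · field_simp
    ring

lemma HasDerivAt.one_sub_const_div_sq {f : ℝ → ℝ} {f' z : ℝ} (c : ℝ) (hf : HasDerivAt f f' z)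
    (hz : f z ≠ 0) :
    HasDerivAt (fun w => 1 - c / f w ^ 2) (2 * c * f' / f z ^ 3) z :=
  (((hasDerivAt_const z c).fun_div (hf.fun_pow 2) (pow_ne_zero 2 hz)).const_sub 1).congr_deriv
    (by field_simp; ring)

lemma HasDerivAt.sq_div_pow_three {u : ℝ → ℝ} {u' z : ℝ} (hu : HasDerivAt u u' z) (hz : u z ≠ 0) :
    HasDerivAt (fun w => w ^ 2 / u w ^ 3) ((2 * z * u z - 3 * z ^ 2 * u') / u z ^ 4) z :=
  ((hasDerivAt_pow 2 z).fun_div (hu.fun_pow 3) (pow_ne_zero 3 hz)).congr_deriv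
    (by field_simp; ring)

theorem stmt_17_general (f ν : ℝ → ℝ) (L : ℝ) (hL : 0 < L)
    (hfdiff : ∀ z : ℝ, 0 < z → DifferentiableAt ℝ f z)
    (hν : ∀ z : ℝ, 0 < z → z * deriv f z = f z * (ν z) ^ 2)
    (z : ℝ) (hz : 0 < z) (hfz : L < f z) :
    HasDerivAt
      (fun z : ℝ => ((3 / 4) / (1 - L ^ 2 / (f z) ^ 2)) ^ 4 * z ^ 2 *
        (L ^ 2 / (f z) ^ 2 - 1 + 1 / ((3 / 4) / (1 - L ^ 2 / (f z) ^ 2))))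
      (2 / 3 * z * ((3 / 4) / (1 - L ^ 2 / (f z) ^ 2)) ^ 4 *
        (1 - L ^ 2 / ((f z) ^ 2 / (1 + 3 * (ν z) ^ 2)))) z ∧
    (L ^ 2 < (f z) ^ 2 / (1 + 3 * (ν z) ^ 2) →
      0 < 2 / 3 * z * ((3 / 4) / (1 - L ^ 2 / (f z) ^ 2)) ^ 4 *
        (1 - L ^ 2 / ((f z) ^ 2 / (1 + 3 * (ν z) ^ 2)))) ∧
    ((f z) ^ 2 / (1 + 3 * (ν z) ^ 2) < L ^ 2 →
      2 / 3 * z * ((3 / 4) / (1 - L ^ 2 / (f z) ^ 2)) ^ 4 *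
        (1 - L ^ 2 / ((f z) ^ 2 / (1 + 3 * (ν z) ^ 2))) < 0) := by
  have hf : f z ≠ 0 := (hL.trans hfz).ne'
  have hu : 0 < 1 - L ^ 2 / f z ^ 2 :=
    sub_pos.2 ((div_lt_one (by positivity)).2 (pow_lt_pow_left₀ hfz hL.le two_ne_zero))
  have hJ : (fun w : ℝ => ((3 / 4) / (1 - L ^ 2 / (f w) ^ 2)) ^ 4 * w ^ 2 *
      (L ^ 2 / (f w) ^ 2 - 1 + 1 / ((3 / 4) / (1 - L ^ 2 / (f w) ^ 2)))) =
      fun w => 27 / 256 * (w ^ 2 / (1 - L ^ 2 / f w ^ 2) ^ 3) := by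
    funext w
    rw [mul_right_comm, critical_value_eq]
    ring
  have hderiv := (((hfdiff z hz).hasDerivAt.one_sub_const_div_sq (L ^ 2) hf).sq_div_pow_three
    hu.ne').const_mul (27 / 256)
  have hf' : deriv f z = f z * ν z ^ 2 / z := eq_div_of_mul_eq hz.ne' (by rw [mul_comm, hν z hz])
  have hpos : 0 < 2 / 3 * z * ((3 / 4) / (1 - L ^ 2 / (f z) ^ 2)) ^ 4 := by positivity
  have hℒ : 0 < f z ^ 2 / (1 + 3 * ν z ^ 2) := by positivity
  refine ⟨?_, fun h => mul_pos hpos (sub_pos.2 ((div_lt_one hℒ).2 h)),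
    fun h => mul_neg_of_pos_of_neg hpos (sub_neg.2 ((one_lt_div hℒ).2 h))⟩
  rw [hJ]
  refine hderiv.congr_deriv ?_
  rw [hf']
  field_simp
  ring

theorem stmt_17 (f ν : ℝ → ℝ) (L : ℝ) (hL : 0 < L)
    (hfpos : ∀ z : ℝ, 0 < z → 0 < f z)
    (hfdiff : ∀ z : ℝ, 0 < z → DifferentiableAt ℝ f z)
    (hν : ∀ z : ℝ, 0 < z → z * deriv f z = f z * (ν z) ^ 2)
    (hνr : ∀ z : ℝ, 0 < z → 0 < (ν z) ^ 2 ∧ (ν z) ^ 2 < 1)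
    (z : ℝ) (hz : 0 < z) (hfz : L < f z) :
    HasDerivAt
      (fun z : ℝ => ((3 / 4) / (1 - L ^ 2 / (f z) ^ 2)) ^ 4 * z ^ 2 *
        (L ^ 2 / (f z) ^ 2 - 1 + 1 / ((3 / 4) / (1 - L ^ 2 / (f z) ^ 2))))
      (2 / 3 * z * ((3 / 4) / (1 - L ^ 2 / (f z) ^ 2)) ^ 4 *
        (1 - L ^ 2 / ((f z) ^ 2 / (1 + 3 * (ν z) ^ 2)))) z ∧
    (L ^ 2 < (f z) ^ 2 / (1 + 3 * (ν z) ^ 2) →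
      0 < 2 / 3 * z * ((3 / 4) / (1 - L ^ 2 / (f z) ^ 2)) ^ 4 *
        (1 - L ^ 2 / ((f z) ^ 2 / (1 + 3 * (ν z) ^ 2)))) ∧
    ((f z) ^ 2 / (1 + 3 * (ν z) ^ 2) < L ^ 2 →
      2 / 3 * z * ((3 / 4) / (1 - L ^ 2 / (f z) ^ 2)) ^ 4 *
        (1 - L ^ 2 / ((f z) ^ 2 / (1 + 3 * (ν z) ^ 2))) < 0) :=
  stmt_17_general f ν L hL hfdiff hν z hz hfz
end
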